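/- Let \kappa \geq 2 be an integer and a a real number. Then \frac{\partial}{\partial v}\left( H_{\kappa}(a\sqrt{v}) v^{-\kappa/2} \right) = \kappa(\kappa - 1) v^{-(\kappa+2)/2} H_{\kappa - 2}(a \sqrt{v}) for v > 0. -/

import Mathlib

/-- The physicists' Hermite polynomials, via the recurrence
`H_{n+1}(x) = 2x H_n(x) - H_n'(x)`, equivalent to
`H_n(x) = (-1)^n e^{x^2} (d/dx)^n e^{-x^2}`. -/
noncomputable def hermiteH : ℕ → Polynomial ℤ
  | 0 => 1
  | n + 1 => 2 * Polynomial.X * hermiteH n - Polynomial.derivative (hermiteH n)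

/-- Evaluation of the `n`-th Hermite polynomial at a real number. -/
noncomputable def Hr (n : ℕ) (x : ℝ) : ℝ := Polynomial.aeval x (hermiteH n)

/-!
Differentiating `H_κ` and applying the three-term recurrence both land in `H_{κ-1}` and `H_{κ-2}`;
eliminating `H_{κ-1}` gives the Euler-operator identity `x H_κ'(x) - κ H_κ(x) = 2κ(κ-1) H_{κ-2}(x)`.
For any differentiable `f` the chain rule gives
`d/dv (f(a√v) v^r) = v^(r-1) (a√v f'(a√v) / 2 + r f(a√v))`, so with `r = -κ/2` the derivative
in question is `v^(-κ/2-1) / 2` times the Euler-operator expression at `x = a√v`.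
-/

open Polynomial

theorem hasDerivAt_comp_mul_sqrt_mul_rpow {f : ℝ → ℝ} {f' : ℝ} (a r : ℝ) {v : ℝ} (hv : 0 < v)
    (hf : HasDerivAt f f' (a * √v)) :
    HasDerivAt (fun t : ℝ => f (a * √t) * t ^ r)
      (v ^ (r - 1) * (a * √v * f' / 2 + r * f (a * √v))) v := by
  have hsqrt : HasDerivAt (fun t : ℝ => a * √t) (a * (1 / (2 * √v))) v :=
    (Real.hasDerivAt_sqrt hv.ne').const_mul a
  have hpow : HasDerivAt (fun t : ℝ => t ^ r) (r * v ^ (r - 1)) v :=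
    Real.hasDerivAt_rpow_const (Or.inl hv.ne')
  refine ((hf.comp v hsqrt).mul hpow).congr_deriv ?_
  have hrpow : v ^ r = v ^ (r - 1) * (√v * √v) := by
    rw [Real.mul_self_sqrt hv.le, ← Real.rpow_add_one hv.ne', sub_add_cancel]
  rw [Function.comp_apply, hrpow]
  field_simp

theorem hermiteH_succ (n : ℕ) :
    hermiteH (n + 1) = 2 * X * hermiteH n - derivative (hermiteH n) := rfl

theorem derivative_hermiteH_succ (n : ℕ) :
    derivative (hermiteH (n + 1)) = 2 * ((n : ℤ[X]) + 1) * hermiteH n := by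
  induction n with
  | zero => simp [hermiteH]
  | succ n ih =>
    have hdn : derivative (hermiteH n) = 2 * X * hermiteH n - hermiteH (n + 1) := by
      rw [hermiteH_succ]; ring
    rw [hermiteH_succ (n + 1), derivative_sub]
    simp only [derivative_mul, derivative_ofNat, derivative_X, derivative_natCast,
      derivative_add, derivative_one, ih, hdn]
    push_cast
    ring

theorem hermiteH_succ_succ (n : ℕ) :
    hermiteH (n + 2) = 2 * X * hermiteH (n + 1) - 2 * ((n : ℤ[X]) + 1) * hermiteH n := by
  rw [hermiteH_succ (n + 1), derivative_hermiteH_succ]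

theorem X_mul_derivative_hermiteH_sub (n : ℕ) :
    X * derivative (hermiteH (n + 2)) - ((n : ℤ[X]) + 2) * hermiteH (n + 2)
      = 2 * ((n : ℤ[X]) + 2) * ((n : ℤ[X]) + 1) * hermiteH n := by
  rw [derivative_hermiteH_succ, hermiteH_succ_succ]
  push_cast
  ring

/-- For integer `κ ≥ 2`, real `a` and `v > 0`,
`(∂/∂v)(H_κ(a√v) v^{-κ/2}) = κ(κ-1) v^{-(κ+2)/2} H_{κ-2}(a√v)`. -/
theorem deriv_hermite_rpow (κ : ℕ) (hκ : 2 ≤ κ) (a v : ℝ) (hv : 0 < v) :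
    deriv (fun t : ℝ => Hr κ (a * Real.sqrt t) * t ^ (-(κ : ℝ) / 2)) v
      = (κ : ℝ) * ((κ : ℝ) - 1) * v ^ (-((κ : ℝ) + 2) / 2) * Hr (κ - 2) (a * Real.sqrt v) := by
  obtain ⟨n, rfl⟩ : ∃ n, κ = n + 2 := ⟨κ - 2, by omega⟩
  have hderiv := hasDerivAt_comp_mul_sqrt_mul_rpow a (-((n + 2 : ℕ) : ℝ) / 2) hv
    ((hermiteH (n + 2)).hasDerivAt_aeval (a * √v))
  have heuler := congrArg (aeval (a * √v)) (X_mul_derivative_hermiteH_sub n)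
  simp only [map_sub, map_mul, aeval_X, map_add, map_one, map_natCast, map_ofNat] at heuler
  simp only [Hr, Nat.add_sub_cancel]
  rw [hderiv.deriv, show -((n + 2 : ℕ) : ℝ) / 2 - 1 = -(((n + 2 : ℕ) : ℝ) + 2) / 2 by ring]
  push_cast at heuler ⊢
  linear_combination (v ^ (-((n : ℝ) + 2 + 2) / 2) / 2) * heuler
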